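/- arXiv:1905.08326 — 2 statements merged into one kernel-verified Lean document; each statement's English description precedes it below -/
import Mathlib

section
/- The pure twin group \(\overline{P}_3\) is infinite cyclic; it is generated by the element \((\sigma_1 \sigma_2)^3\), which has infinite order. -/
/-- The defining relations of the twin (planar braid) group on `n + 1` strands,
with generators `σ₁, …, σ_n` indexed by `Fin n`: the squares of the generators
and the commutators of pairs of generators at distance greater than one. -/
def twinRels (n : ℕ) : Set (FreeGroup (Fin n)) :=
  {r | (∃ i : Fin n, r = .of i * .of i) ∨
    ∃ i j : Fin n, (i : ℕ) + 1 < (j : ℕ) ∧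
      r = .of i * .of j * (.of i)⁻¹ * (.of j)⁻¹}

/-- The twin (planar braid) group `B̄_{n+1}` on `n + 1` strands. -/
abbrev TwinGroup (n : ℕ) := PresentedGroup (twinRels n)

theorem twinRels_hold (n : ℕ) :
    ∀ r ∈ twinRels n,
      FreeGroup.lift (fun i : Fin n => Equiv.swap (i.castSucc) (i.succ)) r = 1 := by
  rintro r (⟨i, rfl⟩ | ⟨i, j, hij, rfl⟩)
  · simp only [map_mul, FreeGroup.lift_apply_of]
    exact Equiv.swap_mul_self _ _
  · simp only [map_mul, map_inv, FreeGroup.lift_apply_of]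
    have hd : (Equiv.swap (i.castSucc) (i.succ)).Disjoint
        (Equiv.swap (j.castSucc) (j.succ)) := by
      intro x
      by_cases h1 : x = i.castSucc
      · right; subst h1
        apply Equiv.swap_apply_of_ne_of_ne <;> simp [Fin.ext_iff] <;> omega
      by_cases h2 : x = i.succ
      · right; subst h2
        apply Equiv.swap_apply_of_ne_of_ne <;> simp [Fin.ext_iff] <;> omega
      · left; exact Equiv.swap_apply_of_ne_of_ne h1 h2
    rw [hd.commute.eq]
    group

/-- The permutation homomorphism of the twin group on `n + 1` strands,
sending `σ_i` to the adjacent transposition `(i, i+1)`. -/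
def twinPerm (n : ℕ) : TwinGroup n →* Equiv.Perm (Fin (n + 1)) :=
  PresentedGroup.toGroup (twinRels_hold n)

/-!
`B̄₃` is the infinite dihedral group: every element is `(σ₁σ₂)ᵏ` or `(σ₁σ₂)ᵏσ₁`. The permutation
map sends `σ₁σ₂` to a 3-cycle and `(σ₁σ₂)ᵏσ₁` to an odd permutation, so its kernel consists of
the powers of `(σ₁σ₂)³`. Sending `σ₁, σ₂` to the reflections `s₀, s₁` of the infinite dihedral
group maps `σ₁σ₂` to the rotation `r 1` of infinite order.
-/

namespace TwinGroup

open PresentedGroup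

variable {n : ℕ}

theorem of_mul_self (i : Fin n) : (of i : TwinGroup n) * of i = 1 :=
  one_of_mem (Or.inl ⟨i, rfl⟩)

theorem of_inv (i : Fin n) : (of i : TwinGroup n)⁻¹ = of i :=
  inv_eq_of_mul_eq_one_right (of_mul_self i)

theorem twinPerm_of (i : Fin n) : twinPerm n (of i) = Equiv.swap i.castSucc i.succ :=
  toGroup.of (twinRels_hold n)

theorem sign_twinPerm_of (i : Fin n) : Equiv.Perm.sign (twinPerm n (of i)) = -1 := by
  rw [twinPerm_of, Equiv.Perm.sign_swap Fin.castSucc_lt_succ.ne]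

local notation "σ₁" => (of 0 : TwinGroup 2)
local notation "σ₂" => (of 1 : TwinGroup 2)

/-- Right multiplication by `σ₁` or `σ₂` preserves this normal form, since
`(σ₁σ₂)ᵏ σ₂ = (σ₁σ₂)ᵏ⁻¹ σ₁`. -/
theorem exists_eq_zpow_or_eq_zpow_mul (x : TwinGroup 2) :
    ∃ k : ℤ, x = (σ₁ * σ₂) ^ k ∨ x = (σ₁ * σ₂) ^ k * σ₁ := by
  have mul_of (x : TwinGroup 2) (i : Fin 2)
      (hx : ∃ k : ℤ, x = (σ₁ * σ₂) ^ k ∨ x = (σ₁ * σ₂) ^ k * σ₁) :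
      ∃ k : ℤ, x * of i = (σ₁ * σ₂) ^ k ∨ x * of i = (σ₁ * σ₂) ^ k * σ₁ := by
    obtain ⟨k, rfl | rfl⟩ := hx <;> revert i <;> refine Fin.forall_fin_two.2 ⟨?_, ?_⟩
    · exact ⟨k, .inr rfl⟩
    · refine ⟨k - 1, .inr ?_⟩
      rw [zpow_sub_one, mul_assoc, mul_inv_rev, of_inv, of_inv, mul_assoc, of_mul_self, mul_one]
    · exact ⟨k, .inl (by rw [mul_assoc, of_mul_self, mul_one])⟩
    · exact ⟨k + 1, .inl (by rw [zpow_add_one, mul_assoc])⟩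
  have hx : x ∈ Subgroup.closure (Set.range of) := by simp
  induction hx using Subgroup.closure_induction_right with
  | one => exact ⟨0, .inl (zpow_zero _).symm⟩
  | mul_right x _ _ hy ih =>
    obtain ⟨i, rfl⟩ := hy
    exact mul_of x i ih
  | mul_inv_cancel x _ _ hy ih =>
    obtain ⟨i, rfl⟩ := hy
    exact of_inv i ▸ mul_of x i ih

theorem twinPerm_two_of_mul_of : twinPerm 2 (σ₁ * σ₂) = finRotate 3 := by
  rw [map_mul, twinPerm_of, twinPerm_of]
  decide

theorem zpow_mem_ker_twinPerm_iff (k : ℤ) :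
    (σ₁ * σ₂) ^ k ∈ (twinPerm 2).ker ↔ (3 : ℤ) ∣ k := by
  have : orderOf (finRotate 3) = 3 := orderOf_eq_prime (by decide) (by decide)
  rw [MonoidHom.mem_ker, map_zpow, twinPerm_two_of_mul_of, ← orderOf_dvd_iff_zpow_eq_one, this,
    Nat.cast_ofNat]

theorem zpow_mul_of_notMem_ker_twinPerm (k : ℤ) : (σ₁ * σ₂) ^ k * σ₁ ∉ (twinPerm 2).ker := by
  intro h
  have := congrArg Equiv.Perm.sign (MonoidHom.mem_ker.1 h)
  simp [sign_twinPerm_of] at this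

def twoToInfiniteDihedral : TwinGroup 2 →* DihedralGroup 0 :=
  toGroup (f := fun i => DihedralGroup.sr i.val) <| by
    rintro r (⟨i, rfl⟩ | ⟨i, j, hij, rfl⟩)
    · simp
    · omega

theorem twoToInfiniteDihedral_of_mul_of :
    twoToInfiniteDihedral (σ₁ * σ₂) = DihedralGroup.r 1 := by
  simp [twoToInfiniteDihedral, toGroup.of]

theorem not_isOfFinOrder_of_mul_of : ¬IsOfFinOrder (σ₁ * σ₂) := by
  have h := orderOf_map_dvd twoToInfiniteDihedral (σ₁ * σ₂)
  rw [twoToInfiniteDihedral_of_mul_of, DihedralGroup.orderOf_r_one, zero_dvd_iff] at h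
  exact orderOf_eq_zero_iff.1 h

end TwinGroup

open TwinGroup in
/-- The pure twin group `P̄₃` is infinite cyclic, generated by `(σ₁σ₂)³`,
which has infinite order. -/
theorem pureTwin_three_infinite_cyclic :
    (PresentedGroup.of 0 * PresentedGroup.of 1 : TwinGroup 2) ^ 3 ∈
        MonoidHom.ker (twinPerm 2) ∧
    (∀ x ∈ MonoidHom.ker (twinPerm 2), ∃ k : ℤ,
      x = ((PresentedGroup.of 0 * PresentedGroup.of 1 : TwinGroup 2) ^ 3) ^ k) ∧
    ¬ IsOfFinOrder ((PresentedGroup.of 0 * PresentedGroup.of 1 : TwinGroup 2) ^ 3) := by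
  refine ⟨by simpa using (zpow_mem_ker_twinPerm_iff 3).2 dvd_rfl, fun x hx => ?_, ?_⟩
  · obtain ⟨k, rfl | rfl⟩ := exists_eq_zpow_or_eq_zpow_mul x
    · obtain ⟨m, rfl⟩ := (zpow_mem_ker_twinPerm_iff k).1 hx
      exact ⟨m, by rw [zpow_mul, zpow_ofNat]⟩
    · exact absurd hx (zpow_mul_of_notMem_ker_twinPerm k)
  · exact fun h => not_isOfFinOrder_of_mul_of (h.of_pow three_ne_zero)
end

section
/- The pure twin group \(\overline{P}_5\) is isomorphic to the free group \(F_{31}\) of rank 31. -/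
/-!
Reidemeister–Schreier for the permutation map `π : B̄₅ → S₅`. Fix a word `T p` with image `p` for
each of the 120 permutations; the Schreier elements `T p * σᵢ * (T (p * τᵢ))⁻¹` generate `P̄₅`, and
each of them can be written in terms of 31 free generators. This rewriting is a homomorphism
`Θ : B̄₅ → F₃₁ ≀ S₅` over `π` (that it respects the relations is a finite check in `F₃₁`), and on
`P̄₅` its coordinate at `1` is a homomorphism `P̄₅ → F₃₁`. Sending the free generators to explicit
elements of `P̄₅` gives the inverse: one composite fixes the free generators (a finite check in
`F₃₁`); for the other, pushing `Θ` forward along this map gives the Kaloujnine–Krasner embedding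
`B̄₅ → B̄₅ ≀ S₅` built from `T`, whose coordinate at `1` is the identity on `P̄₅` (finitely many
identities in `B̄₅`, verified by rewriting with its relations).
-/

namespace RegularWreathProduct

variable {D E G Q : Type*} [Group D] [Group E] [Group G] [Group Q]

def mapLeft (f : D →* E) : D ≀ᵣ Q →* E ≀ᵣ Q where
  toFun a := ⟨f ∘ a.left, a.right⟩
  map_one' := by ext <;> simp
  map_mul' a b := by ext <;> simp

/-- The Kaloujnine–Krasner embedding for the coset representatives `T`; coordinates are indexed by
`x⁻¹` because `Q` acts on `Q → G` from the left in `G ≀ᵣ Q`. -/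
def ofTransversal (π : G →* Q) (T : Q → G) : G →* G ≀ᵣ Q where
  toFun g := ⟨fun x => T x⁻¹ * g * (T (x⁻¹ * π g))⁻¹, π g⟩
  map_one' := by ext <;> simp
  map_mul' g h := by ext x <;> simp [mul_assoc]

def leftAtOne (Θ : G →* D ≀ᵣ Q) {π : G →* Q} (hΘ : rightHom.comp Θ = π) : π.ker →* D where
  toFun g := (Θ g).left 1
  map_one' := by simp
  map_mul' g h := by
    have hg : (Θ g).right = 1 := (DFunLike.congr_fun hΘ (g : G)).trans g.2
    simp [hg]

lemma map_leftAtOne {Θ : G →* D ≀ᵣ Q} {π : G →* Q} (hΘ : rightHom.comp Θ = π) {f : D →* G}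
    {T : Q → G} (hf : (mapLeft f).comp Θ = ofTransversal π T) (hT : T 1 = 1) (g : π.ker) :
    f (leftAtOne Θ hΘ g) = g := by
  have := congrArg (fun a => a.left 1) (DFunLike.congr_fun hf (g : G))
  simpa [mapLeft, ofTransversal, leftAtOne, MonoidHom.mem_ker.mp g.2, hT] using this

end RegularWreathProduct

namespace TwinGroup

open Equiv

variable {n : ℕ}

def σ (i : Fin n) : TwinGroup n := PresentedGroup.of i

lemma σ_mul_self (i : Fin n) : σ i * σ i = 1 :=
  PresentedGroup.one_of_mem (Or.inl ⟨i, rfl⟩)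

lemma σ_inv (i : Fin n) : (σ i)⁻¹ = σ i :=
  inv_eq_of_mul_eq_one_right (σ_mul_self i)

lemma σ_mul_σ_comm {i j : Fin n} (hij : (i : ℕ) + 1 < j) : σ i * σ j = σ j * σ i := by
  have h : σ i * σ j * (σ i)⁻¹ * (σ j)⁻¹ = 1 :=
    PresentedGroup.one_of_mem (Or.inr ⟨i, j, hij, rfl⟩)
  rwa [mul_inv_eq_one, mul_inv_eq_iff_eq_mul] at h

def lift {H : Type*} [Group H] (g : Fin n → H) (hsq : ∀ i, g i * g i = 1)
    (hcomm : ∀ i j : Fin n, (i : ℕ) + 1 < j → g i * g j = g j * g i) : TwinGroup n →* H :=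
  PresentedGroup.toGroup (f := g) <| by
    rintro r (⟨i, rfl⟩ | ⟨i, j, hij, rfl⟩)
    · simpa using hsq i
    · simp [hcomm i j hij]

lemma lift_σ {H : Type*} [Group H] {g : Fin n → H} (hsq : ∀ i, g i * g i = 1)
    (hcomm : ∀ i j : Fin n, (i : ℕ) + 1 < j → g i * g j = g j * g i) (i : Fin n) :
    lift g hsq hcomm (σ i) = g i :=
  PresentedGroup.toGroup.of _

lemma twinPerm_σ (i : Fin n) : twinPerm n (σ i) = swap i.castSucc i.succ :=
  PresentedGroup.toGroup.of _

def ofWord (l : List (Fin n)) : TwinGroup n := (l.map σ).prod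

lemma ofWord_cons (i : Fin n) (l : List (Fin n)) : ofWord (i :: l) = σ i * ofWord l :=
  List.prod_cons

lemma ofWord_append (l l' : List (Fin n)) : ofWord (l ++ l') = ofWord l * ofWord l' := by
  simp [ofWord]

lemma ofWord_reverse (l : List (Fin n)) : ofWord l.reverse = (ofWord l)⁻¹ := by
  simp [ofWord, List.prod_inv_reverse, Function.comp_def, σ_inv]

lemma mk_eq_ofWord (w : FreeGroup (Fin n)) :
    PresentedGroup.mk (twinRels n) w = ofWord (w.toWord.map Prod.fst) := by
  conv_lhs => rw [← FreeGroup.mk_toWord (x := w)]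
  induction w.toWord with
  | nil => rfl
  | cons a l ih =>
    have hletter : PresentedGroup.mk (twinRels n) (FreeGroup.mk [a]) = σ a.1 := by
      obtain ⟨i, _ | _⟩ := a
      · exact (map_inv _ (FreeGroup.of i)).trans (σ_inv i)
      · rfl
    rw [← List.singleton_append, ← FreeGroup.mul_mk, map_mul, hletter, ih]
    rfl

/-- Rewriting with the relations; not a normal form, so `normalize` only certifies equalities. -/
def insertGen (i : Fin n) : List (Fin n) → List (Fin n)
  | [] => [i]
  | j :: l => if i = j then l else if (j : ℕ) + 1 < i then j :: insertGen i l else i :: j :: l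

def normalize (l : List (Fin n)) : List (Fin n) := l.foldr insertGen []

lemma ofWord_insertGen (i : Fin n) (l : List (Fin n)) :
    ofWord (insertGen i l) = σ i * ofWord l := by
  induction l with
  | nil => rfl
  | cons j l ih =>
    unfold insertGen
    split_ifs with hij hji
    · rw [hij, ofWord_cons, ← mul_assoc, σ_mul_self, one_mul]
    · rw [ofWord_cons, ofWord_cons, ih, ← mul_assoc, ← mul_assoc, σ_mul_σ_comm hji]
    · rfl

lemma ofWord_normalize (l : List (Fin n)) : ofWord (normalize l) = ofWord l := by
  induction l with
  | nil => rfl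
  | cons i l ih => rw [normalize, List.foldr_cons, ← normalize, ofWord_insertGen, ih, ofWord_cons]

lemma ofWord_eq_of_normalize_eq {l l' : List (Fin n)} (h : normalize l = normalize l') :
    ofWord l = ofWord l' := by
  rw [← ofWord_normalize l, h, ofWord_normalize]

end TwinGroup

namespace PureTwinFive

open Equiv FreeGroup RegularWreathProduct TwinGroup

/-- Row `(p, T p, S)`: a permutation `p` in one-line notation `[p 0, …, p 4]`, a word `T p` in
the generators with image `p`, and for each `i` with `T p * σᵢ * (T (p * τᵢ))⁻¹ ≠ 1` that Schreier
element written in the free generators of `P̄₅`. -/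
def cosetTable : List (List (Fin 5) × List (Fin 4) × List (Fin 4 × FreeGroup (Fin 31))) := [
  ([0, 1, 2, 3, 4], [], []),
  ([1, 0, 2, 3, 4], [0], []),
  ([0, 2, 1, 3, 4], [1], []),
  ([0, 1, 3, 2, 4], [2], []),
  ([0, 1, 2, 4, 3], [3], []),
  ([1, 2, 0, 3, 4], [0, 1], []),
  ([1, 0, 3, 2, 4], [0, 2], []),
  ([1, 0, 2, 4, 3], [0, 3], []),
  ([2, 0, 1, 3, 4], [1, 0], [(1, of 13)]),
  ([0, 2, 3, 1, 4], [1, 2], []),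
  ([0, 2, 1, 4, 3], [1, 3], []),
  ([0, 3, 1, 2, 4], [2, 1], [(2, of 2)]),
  ([0, 1, 3, 4, 2], [2, 3], []),
  ([0, 1, 4, 2, 3], [3, 2], [(3, of 0)]),
  ([2, 1, 0, 3, 4], [0, 1, 0], [(1, (of 13)⁻¹)]),
  ([1, 2, 3, 0, 4], [0, 1, 2], []),
  ([1, 2, 0, 4, 3], [0, 1, 3], []),
  ([1, 3, 0, 2, 4], [0, 2, 1], [(2, of 8)]),
  ([1, 0, 3, 4, 2], [0, 2, 3], []),
  ([1, 0, 4, 2, 3], [0, 3, 2], [(3, of 0)]),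
  ([2, 0, 3, 1, 4], [1, 0, 2], []),
  ([2, 0, 1, 4, 3], [1, 0, 3], [(1, of 13)]),
  ([0, 3, 2, 1, 4], [1, 2, 1], [(2, (of 2)⁻¹)]),
  ([0, 2, 3, 4, 1], [1, 2, 3], []),
  ([0, 2, 4, 1, 3], [1, 3, 2], [(3, of 1)]),
  ([3, 0, 1, 2, 4], [2, 1, 0], [(1, of 19), (2, of 2)]),
  ([0, 3, 1, 4, 2], [2, 1, 3], []),
  ([0, 1, 4, 3, 2], [2, 3, 2], [(3, (of 0)⁻¹)]),
  ([0, 4, 1, 2, 3], [3, 2, 1], [(2, of 4), (3, of 0)]),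
  ([2, 1, 3, 0, 4], [0, 1, 0, 2], []),
  ([2, 1, 0, 4, 3], [0, 1, 0, 3], [(1, (of 13)⁻¹)]),
  ([1, 3, 2, 0, 4], [0, 1, 2, 1], [(2, (of 8)⁻¹)]),
  ([1, 2, 3, 4, 0], [0, 1, 2, 3], []),
  ([1, 2, 4, 0, 3], [0, 1, 3, 2], [(3, of 7)]),
  ([3, 1, 0, 2, 4], [0, 2, 1, 0], [(1, (of 19)⁻¹), (2, of 8)]),
  ([1, 3, 0, 4, 2], [0, 2, 1, 3], []),
  ([1, 0, 4, 3, 2], [0, 2, 3, 2], [(3, (of 0)⁻¹)]),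
  ([1, 4, 0, 2, 3], [0, 3, 2, 1], [(2, of 10), (3, of 0)]),
  ([2, 3, 0, 1, 4], [1, 0, 2, 1], [(2, of 14)]),
  ([2, 0, 3, 4, 1], [1, 0, 2, 3], []),
  ([2, 0, 4, 1, 3], [1, 0, 3, 2], [(3, of 1)]),
  ([3, 0, 2, 1, 4], [1, 2, 1, 0], [(1, of 20), (2, (of 2)⁻¹)]),
  ([0, 3, 2, 4, 1], [1, 2, 1, 3], []),
  ([0, 2, 4, 3, 1], [1, 2, 3, 2], [(3, (of 1)⁻¹)]),
  ([0, 4, 2, 1, 3], [1, 3, 2, 1], [(2, (of 4)⁻¹), (3, of 1)]),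
  ([3, 0, 1, 4, 2], [2, 1, 0, 3], [(1, of 19)]),
  ([0, 3, 4, 1, 2], [2, 1, 3, 2], [(3, of 3)]),
  ([0, 4, 1, 3, 2], [2, 3, 2, 1], [(2, of 5), (3, (of 0)⁻¹)]),
  ([4, 0, 1, 2, 3], [3, 2, 1, 0], [(1, of 0 * of 25 * (of 0)⁻¹), (2, of 4), (3, of 0)]),
  ([2, 3, 1, 0, 4], [0, 1, 0, 2, 1], [(2, (of 14)⁻¹)]),
  ([2, 1, 3, 4, 0], [0, 1, 0, 2, 3], []),
  ([2, 1, 4, 0, 3], [0, 1, 0, 3, 2], [(3, of 7)]),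
  ([3, 1, 2, 0, 4], [0, 1, 2, 1, 0], [(1, of 21), (2, (of 8)⁻¹)]),
  ([1, 3, 2, 4, 0], [0, 1, 2, 1, 3], []),
  ([1, 2, 4, 3, 0], [0, 1, 2, 3, 2], [(3, (of 7)⁻¹)]),
  ([1, 4, 2, 0, 3], [0, 1, 3, 2, 1], [(2, (of 10)⁻¹), (3, of 7)]),
  ([3, 1, 0, 4, 2], [0, 2, 1, 0, 3], [(1, (of 19)⁻¹)]),
  ([1, 3, 4, 0, 2], [0, 2, 1, 3, 2], [(3, of 9)]),
  ([1, 4, 0, 3, 2], [0, 2, 3, 2, 1], [(2, of 11), (3, (of 0)⁻¹)]),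
  ([4, 1, 0, 2, 3], [0, 3, 2, 1, 0], [(1, of 0 * (of 25)⁻¹ * (of 0)⁻¹), (2, of 10), (3, of 0)]),
  ([3, 2, 0, 1, 4], [1, 0, 2, 1, 0], [(1, (of 20)⁻¹), (2, of 14)]),
  ([2, 3, 0, 4, 1], [1, 0, 2, 1, 3], []),
  ([2, 0, 4, 3, 1], [1, 0, 2, 3, 2], [(3, (of 1)⁻¹)]),
  ([2, 4, 0, 1, 3], [1, 0, 3, 2, 1], [(2, of 16), (3, of 1)]),
  ([3, 0, 2, 4, 1], [1, 2, 1, 0, 3], [(1, of 20)]),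
  ([0, 3, 4, 2, 1], [1, 2, 1, 3, 2], [(3, (of 3)⁻¹)]),
  ([0, 4, 2, 3, 1], [1, 2, 3, 2, 1], [(2, of 6), (3, (of 1)⁻¹)]),
  ([4, 0, 2, 1, 3], [1, 3, 2, 1, 0], [(1, of 1 * of 26 * (of 1)⁻¹), (2, (of 4)⁻¹), (3, of 1)]),
  ([3, 0, 4, 1, 2], [2, 1, 0, 3, 2], [(3, of 3)]),
  ([0, 4, 3, 1, 2], [2, 1, 3, 2, 1], [(2, (of 5)⁻¹), (3, of 3)]),
  ([4, 0, 1, 3, 2], [2, 3, 2, 1, 0], [(1, of 25), (2, of 5), (3, (of 0)⁻¹)]),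
  ([3, 2, 1, 0, 4], [0, 1, 0, 2, 1, 0], [(1, (of 21)⁻¹), (2, (of 14)⁻¹)]),
  ([2, 3, 1, 4, 0], [0, 1, 0, 2, 1, 3], []),
  ([2, 1, 4, 3, 0], [0, 1, 0, 2, 3, 2], [(3, (of 7)⁻¹)]),
  ([2, 4, 1, 0, 3], [0, 1, 0, 3, 2, 1], [(2, (of 16)⁻¹), (3, of 7)]),
  ([3, 1, 2, 4, 0], [0, 1, 2, 1, 0, 3], [(1, of 21)]),
  ([1, 3, 4, 2, 0], [0, 1, 2, 1, 3, 2], [(3, (of 9)⁻¹)]),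
  ([1, 4, 2, 3, 0], [0, 1, 2, 3, 2, 1], [(2, of 12), (3, (of 7)⁻¹)]),
  ([4, 1, 2, 0, 3], [0, 1, 3, 2, 1, 0], [(1, of 7 * of 28 * (of 7)⁻¹), (2, (of 10)⁻¹), (3, of 7)]),
  ([3, 1, 4, 0, 2], [0, 2, 1, 0, 3, 2], [(3, of 9)]),
  ([1, 4, 3, 0, 2], [0, 2, 1, 3, 2, 1], [(2, (of 11)⁻¹), (3, of 9)]),
  ([4, 1, 0, 3, 2], [0, 2, 3, 2, 1, 0], [(1, (of 25)⁻¹), (2, of 11), (3, (of 0)⁻¹)]),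
  ([3, 2, 0, 4, 1], [1, 0, 2, 1, 0, 3], [(1, (of 20)⁻¹)]),
  ([2, 3, 4, 0, 1], [1, 0, 2, 1, 3, 2], [(3, of 15)]),
  ([2, 4, 0, 3, 1], [1, 0, 2, 3, 2, 1], [(2, of 17), (3, (of 1)⁻¹)]),
  ([4, 2, 0, 1, 3], [1, 0, 3, 2, 1, 0], [(1, of 1 * (of 26)⁻¹ * (of 1)⁻¹), (2, of 16), (3, of 1)]),
  ([3, 0, 4, 2, 1], [1, 2, 1, 0, 3, 2], [(3, (of 3)⁻¹)]),
  ([0, 4, 3, 2, 1], [1, 2, 1, 3, 2, 1], [(2, (of 6)⁻¹), (3, (of 3)⁻¹)]),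
  ([4, 0, 2, 3, 1], [1, 2, 3, 2, 1, 0], [(1, of 26), (2, of 6), (3, (of 1)⁻¹)]),
  ([3, 4, 0, 1, 2], [2, 1, 0, 3, 2, 1], [(2, of 22), (3, of 3)]),
  ([4, 0, 3, 1, 2], [2, 1, 3, 2, 1, 0], [(1, of 3 * of 27 * (of 3)⁻¹), (2, (of 5)⁻¹), (3, of 3)]),
  ([3, 2, 1, 4, 0], [0, 1, 0, 2, 1, 0, 3], [(1, (of 21)⁻¹)]),
  ([2, 3, 4, 1, 0], [0, 1, 0, 2, 1, 3, 2], [(3, (of 15)⁻¹)]),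
  ([2, 4, 1, 3, 0], [0, 1, 0, 2, 3, 2, 1], [(2, of 18), (3, (of 7)⁻¹)]),
  ([4, 2, 1, 0, 3], [0, 1, 0, 3, 2, 1, 0],
    [(1, of 7 * (of 28)⁻¹ * (of 7)⁻¹), (2, (of 16)⁻¹), (3, of 7)]),
  ([3, 1, 4, 2, 0], [0, 1, 2, 1, 0, 3, 2], [(3, (of 9)⁻¹)]),
  ([1, 4, 3, 2, 0], [0, 1, 2, 1, 3, 2, 1], [(2, (of 12)⁻¹), (3, (of 9)⁻¹)]),
  ([4, 1, 2, 3, 0], [0, 1, 2, 3, 2, 1, 0], [(1, of 28), (2, of 12), (3, (of 7)⁻¹)]),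
  ([3, 4, 1, 0, 2], [0, 2, 1, 0, 3, 2, 1], [(2, (of 22)⁻¹), (3, of 9)]),
  ([4, 1, 3, 0, 2], [0, 2, 1, 3, 2, 1, 0],
    [(1, of 9 * of 29 * (of 9)⁻¹), (2, (of 11)⁻¹), (3, of 9)]),
  ([3, 2, 4, 0, 1], [1, 0, 2, 1, 0, 3, 2], [(3, of 15)]),
  ([2, 4, 3, 0, 1], [1, 0, 2, 1, 3, 2, 1], [(2, (of 17)⁻¹), (3, of 15)]),
  ([4, 2, 0, 3, 1], [1, 0, 2, 3, 2, 1, 0], [(1, (of 26)⁻¹), (2, of 17), (3, (of 1)⁻¹)]),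
  ([3, 4, 0, 2, 1], [1, 2, 1, 0, 3, 2, 1], [(2, of 23), (3, (of 3)⁻¹)]),
  ([4, 0, 3, 2, 1], [1, 2, 1, 3, 2, 1, 0], [(1, of 27), (2, (of 6)⁻¹), (3, (of 3)⁻¹)]),
  ([4, 3, 0, 1, 2], [2, 1, 0, 3, 2, 1, 0],
    [(1, of 3 * (of 27)⁻¹ * (of 3)⁻¹), (2, of 22), (3, of 3)]),
  ([3, 2, 4, 1, 0], [0, 1, 0, 2, 1, 0, 3, 2], [(3, (of 15)⁻¹)]),
  ([2, 4, 3, 1, 0], [0, 1, 0, 2, 1, 3, 2, 1], [(2, (of 18)⁻¹), (3, (of 15)⁻¹)]),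
  ([4, 2, 1, 3, 0], [0, 1, 0, 2, 3, 2, 1, 0], [(1, (of 28)⁻¹), (2, of 18), (3, (of 7)⁻¹)]),
  ([3, 4, 1, 2, 0], [0, 1, 2, 1, 0, 3, 2, 1], [(2, of 24), (3, (of 9)⁻¹)]),
  ([4, 1, 3, 2, 0], [0, 1, 2, 1, 3, 2, 1, 0], [(1, of 29), (2, (of 12)⁻¹), (3, (of 9)⁻¹)]),
  ([4, 3, 1, 0, 2], [0, 2, 1, 0, 3, 2, 1, 0],
    [(1, of 9 * (of 29)⁻¹ * (of 9)⁻¹), (2, (of 22)⁻¹), (3, of 9)]),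
  ([3, 4, 2, 0, 1], [1, 0, 2, 1, 0, 3, 2, 1], [(2, (of 23)⁻¹), (3, of 15)]),
  ([4, 2, 3, 0, 1], [1, 0, 2, 1, 3, 2, 1, 0],
    [(1, of 15 * of 30 * (of 15)⁻¹), (2, (of 17)⁻¹), (3, of 15)]),
  ([4, 3, 0, 2, 1], [1, 2, 1, 0, 3, 2, 1, 0], [(1, (of 27)⁻¹), (2, of 23), (3, (of 3)⁻¹)]),
  ([3, 4, 2, 1, 0], [0, 1, 0, 2, 1, 0, 3, 2, 1], [(2, (of 24)⁻¹), (3, (of 15)⁻¹)]),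
  ([4, 2, 3, 1, 0], [0, 1, 0, 2, 1, 3, 2, 1, 0], [(1, of 30), (2, (of 18)⁻¹), (3, (of 15)⁻¹)]),
  ([4, 3, 1, 2, 0], [0, 1, 2, 1, 0, 3, 2, 1, 0], [(1, (of 29)⁻¹), (2, of 24), (3, (of 9)⁻¹)]),
  ([4, 3, 2, 0, 1], [1, 0, 2, 1, 0, 3, 2, 1, 0],
    [(1, of 15 * (of 30)⁻¹ * (of 15)⁻¹), (2, (of 23)⁻¹), (3, of 15)]),
  ([4, 3, 2, 1, 0], [0, 1, 0, 2, 1, 0, 3, 2, 1, 0],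
    [(1, (of 30)⁻¹), (2, (of 24)⁻¹), (3, (of 15)⁻¹)])]

def basisWord : Fin 31 → List (Fin 4) := ![
  [3, 2, 3, 2, 3, 2],
  [1, 3, 2, 3, 2, 3, 2, 1],
  [2, 1, 2, 1, 2, 1],
  [2, 1, 3, 2, 3, 2, 3, 1, 2, 1],
  [3, 2, 1, 2, 1, 2, 3, 1],
  [2, 3, 2, 1, 2, 1, 2, 3, 1, 2],
  [1, 2, 3, 2, 1, 2, 1, 2, 3, 1, 2, 1],
  [0, 1, 3, 2, 3, 2, 3, 2, 1, 0],
  [0, 2, 1, 2, 1, 2, 1, 0],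
  [0, 2, 1, 3, 2, 3, 2, 3, 1, 2, 1, 0],
  [0, 3, 2, 1, 2, 1, 2, 3, 1, 0],
  [0, 2, 3, 2, 1, 2, 1, 2, 3, 1, 2, 0],
  [0, 1, 2, 3, 2, 1, 2, 1, 2, 3, 1, 2, 1, 0],
  [1, 0, 3, 1, 3, 0, 1, 0],
  [1, 0, 2, 1, 2, 1, 2, 0, 1, 0],
  [1, 0, 2, 1, 3, 2, 3, 2, 3, 1, 2, 0, 1, 0],
  [1, 0, 3, 2, 1, 2, 1, 2, 3, 0, 1, 0],
  [1, 0, 2, 3, 2, 1, 2, 1, 2, 3, 1, 2, 0, 1],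
  [0, 1, 0, 2, 3, 2, 1, 2, 1, 2, 3, 1, 2, 0, 1, 0],
  [2, 1, 0, 3, 1, 3, 0, 1, 2, 0],
  [1, 2, 1, 0, 3, 1, 3, 0, 1, 2, 0, 1],
  [0, 1, 2, 1, 0, 3, 1, 3, 0, 1, 2, 0, 1, 0],
  [2, 1, 0, 3, 2, 1, 2, 1, 2, 3, 0, 1, 2, 0],
  [1, 2, 1, 0, 3, 2, 1, 2, 1, 2, 3, 0, 1, 2, 0, 1],
  [0, 1, 2, 1, 0, 3, 2, 1, 2, 1, 2, 3, 0, 1, 2, 0, 1, 0],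
  [2, 3, 2, 1, 0, 1, 0, 1, 2, 3, 2, 0],
  [1, 2, 3, 2, 1, 0, 1, 0, 1, 2, 3, 2, 0, 1],
  [1, 2, 1, 3, 2, 1, 0, 1, 0, 1, 2, 3, 0, 1, 2, 1],
  [0, 1, 2, 3, 2, 1, 0, 1, 0, 1, 2, 3, 2, 0, 1, 0],
  [0, 1, 2, 1, 3, 2, 1, 0, 1, 0, 1, 2, 3, 0, 1, 2, 1, 0],
  [0, 1, 0, 2, 1, 3, 2, 1, 0, 1, 0, 1, 2, 3, 0, 1, 2, 0, 1, 0]]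

def cosetEntry (p : Perm (Fin 5)) : List (Fin 4) × List (Fin 4 × FreeGroup (Fin 31)) :=
  (cosetTable.lookup (List.ofFn p)).getD ([], [])

def transversalWord (p : Perm (Fin 5)) : List (Fin 4) := (cosetEntry p).1

def schreierGen (p : Perm (Fin 5)) (i : Fin 4) : FreeGroup (Fin 31) :=
  ((cosetEntry p).2.lookup i).getD 1

lemma transversalWord_one : transversalWord 1 = [] := by
  decide +kernel

lemma schreierGen_mul_self : ∀ (p : Perm (Fin 5)) (i : Fin 4),
    schreierGen p i * schreierGen (p * swap i.castSucc i.succ) i = 1 := by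
  decide +kernel

lemma schreierGen_comm : ∀ (p : Perm (Fin 5)) (i j : Fin 4), (i : ℕ) + 1 < j →
    schreierGen p i * schreierGen (p * swap i.castSucc i.succ) j =
      schreierGen p j * schreierGen (p * swap j.castSucc j.succ) i := by
  decide +kernel

def monomialGen (i : Fin 4) : FreeGroup (Fin 31) ≀ᵣ Perm (Fin 5) :=
  ⟨fun x => schreierGen x⁻¹ i, swap i.castSucc i.succ⟩

lemma monomialGen_mul_self (i : Fin 4) : monomialGen i * monomialGen i = 1 := by
  refine RegularWreathProduct.ext (funext fun x => ?_) (swap_mul_self _ _)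
  simpa [monomialGen, swap_inv] using schreierGen_mul_self x⁻¹ i

lemma monomialGen_comm (i j : Fin 4) (hij : (i : ℕ) + 1 < j) :
    monomialGen i * monomialGen j = monomialGen j * monomialGen i := by
  refine RegularWreathProduct.ext (funext fun x => ?_) ?_
  · simpa [monomialGen, swap_inv] using schreierGen_comm x⁻¹ i j hij
  · revert i j; decide

def schreierHom : TwinGroup 4 →* FreeGroup (Fin 31) ≀ᵣ Perm (Fin 5) :=
  TwinGroup.lift monomialGen monomialGen_mul_self monomialGen_comm

lemma rightHom_comp_schreierHom : rightHom.comp schreierHom = twinPerm 4 :=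
  PresentedGroup.ext fun i => (congrArg right (lift_σ _ _ i)).trans (twinPerm_σ i).symm

def basisLift : FreeGroup (Fin 31) →* FreeGroup (Fin 4) :=
  FreeGroup.lift fun k => FreeGroup.mk ((basisWord k).map (·, true))

def basisHom : FreeGroup (Fin 31) →* TwinGroup 4 := (PresentedGroup.mk _).comp basisLift

lemma twinPerm_basisHom_of : ∀ k : Fin 31, twinPerm 4 (basisHom (of k)) = 1 := by
  decide +kernel

lemma basisHom_mem_ker (w : FreeGroup (Fin 31)) : basisHom w ∈ (twinPerm 4).ker := by
  suffices (twinPerm 4).comp basisHom = 1 from DFunLike.congr_fun this w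
  exact FreeGroup.ext_hom _ _ twinPerm_basisHom_of

lemma schreierHom_basisHom_of_left_one :
    ∀ k : Fin 31, (schreierHom (basisHom (of k))).left 1 = of k := by
  decide +kernel

lemma normalize_schreierGen : ∀ (p : Perm (Fin 5)) (i : Fin 4),
    normalize ((basisLift (schreierGen p i)).toWord.map Prod.fst) =
      normalize
        (transversalWord p ++ i :: (transversalWord (p * swap i.castSucc i.succ)).reverse) := by
  decide +kernel

lemma mapLeft_basisHom_comp_schreierHom :
    (mapLeft basisHom).comp schreierHom =
      ofTransversal (twinPerm 4) fun p => ofWord (transversalWord p) := by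
  refine PresentedGroup.ext fun i => RegularWreathProduct.ext (funext fun x => ?_) ?_
  · change basisHom ((schreierHom (σ i)).left x) = ofWord (transversalWord x⁻¹) * σ i *
      (ofWord (transversalWord (x⁻¹ * twinPerm 4 (σ i))))⁻¹
    rw [schreierHom, lift_σ, twinPerm_σ]
    change (PresentedGroup.mk _) (basisLift (schreierGen x⁻¹ i)) = _
    rw [mk_eq_ofWord, ofWord_eq_of_normalize_eq (normalize_schreierGen x⁻¹ i), ofWord_append,
      ofWord_cons, ofWord_reverse, mul_assoc]
  · exact DFunLike.congr_fun rightHom_comp_schreierHom (σ i)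

end PureTwinFive

open PureTwinFive RegularWreathProduct

/-- The pure twin group `P̄₅` is free of rank 31. -/
theorem pureTwin_five_free :
    Nonempty ((MonoidHom.ker (twinPerm 4)) ≃* FreeGroup (Fin 31)) := by
  refine ⟨MonoidHom.toMulEquiv (leftAtOne schreierHom rightHom_comp_schreierHom)
    (basisHom.codRestrict _ basisHom_mem_ker) ?_ ?_⟩
  · ext g
    have hT : TwinGroup.ofWord (transversalWord 1) = 1 := by rw [transversalWord_one]; rfl
    exact map_leftAtOne rightHom_comp_schreierHom mapLeft_basisHom_comp_schreierHom hT g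
  · exact FreeGroup.ext_hom _ _ schreierHom_basisHom_of_left_one
end
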